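/- arXiv:2110.06169 — 3 statements merged into one kernel-verified Lean document; each statement's English description precedes it below -/
import Mathlib

section
/- Let (Ω, ℱ, ℙ) be a probability space, X : Ω → ℝ a bounded (essentially bounded) random variable, and τ ∈ (0,1). Then the function m ↦ E[|τ − 𝟙{X − m < 0}|·(X − m)²] has a unique minimizer m_τ ∈ ℝ, and a real number m equals m_τ if and only if τ·E[max(X − m, 0)] = (1 − τ)·E[max(m − X, 0)]. -/
open MeasureTheory

lemma expectile_aux_convex_ineq {τ : ℝ} (hτ : τ ∈ Set.Ioo (0:ℝ) 1) (u v : ℝ) :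
    τ * (max u 0) ^ 2 + (1 - τ) * (max (-u) 0) ^ 2
      + 2 * (τ * max u 0 - (1 - τ) * max (-u) 0) * (v - u)
    ≤ τ * (max v 0) ^ 2 + (1 - τ) * (max (-v) 0) ^ 2 := by
  obtain ⟨h0, h1⟩ := hτ
  rcases le_or_gt 0 u with hu | hu <;> rcases le_or_gt 0 v with hv | hv
  · rw [max_eq_left hu, max_eq_right (by linarith), max_eq_left hv, max_eq_right (by linarith)]
    nlinarith [sq_nonneg (v - u)]
  · rw [max_eq_left hu, max_eq_right (by linarith), max_eq_right hv.le, max_eq_left (by linarith)]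
    nlinarith [mul_nonneg (mul_nonneg h0.le hu) (by linarith : (0:ℝ) ≤ -v),
      mul_nonneg h0.le (sq_nonneg u), mul_nonneg (by linarith : (0:ℝ) ≤ 1 - τ) (sq_nonneg v)]
  · rw [max_eq_right hu.le, max_eq_left (by linarith), max_eq_left hv, max_eq_right (by linarith)]
    nlinarith [mul_nonneg (mul_nonneg (by linarith : (0:ℝ) ≤ 1 - τ) (by linarith : (0:ℝ) ≤ -u)) hv,
      mul_nonneg (by linarith : (0:ℝ) ≤ 1 - τ) (sq_nonneg u), mul_nonneg h0.le (sq_nonneg v)]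
  · rw [max_eq_right hu.le, max_eq_left (by linarith), max_eq_right hv.le, max_eq_left (by linarith)]
    nlinarith [sq_nonneg (v - u)]

lemma expectile_aux_slope_decrease {τ : ℝ} (hτ : τ ∈ Set.Ioo (0:ℝ) 1) {u v : ℝ} (h : v ≤ u) :
    min τ (1 - τ) * (u - v)
      ≤ (τ * max u 0 - (1 - τ) * max (-u) 0) - (τ * max v 0 - (1 - τ) * max (-v) 0) := by
  obtain ⟨h0, h1⟩ := hτ
  have hm1 : min τ (1 - τ) ≤ τ := min_le_left _ _
  have hm2 : min τ (1 - τ) ≤ 1 - τ := min_le_right _ _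
  have hm0 : 0 < min τ (1 - τ) := lt_min h0 (by linarith)
  rcases le_or_gt 0 u with hu | hu <;> rcases le_or_gt 0 v with hv | hv
  · rw [max_eq_left hu, max_eq_right (by linarith), max_eq_left hv, max_eq_right (by linarith)]
    nlinarith
  · rw [max_eq_left hu, max_eq_right (by linarith), max_eq_right hv.le, max_eq_left (by linarith)]
    nlinarith
  · linarith
  · rw [max_eq_right hu.le, max_eq_left (by linarith), max_eq_right hv.le, max_eq_left (by linarith)]
    nlinarith

lemma expectile_aux_slope_lipschitz {τ : ℝ} (hτ : τ ∈ Set.Ioo (0:ℝ) 1) (u v : ℝ) :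
    |(τ * max u 0 - (1 - τ) * max (-u) 0) - (τ * max v 0 - (1 - τ) * max (-v) 0)| ≤ |u - v| := by
  obtain ⟨h0, h1⟩ := hτ
  have k1 := le_abs_self (u - v)
  have k2 := neg_abs_le (u - v)
  rw [abs_le]
  rcases le_or_gt 0 u with hu | hu <;> rcases le_or_gt 0 v with hv | hv
  · rw [max_eq_left hu, max_eq_right (by linarith), max_eq_left hv, max_eq_right (by linarith)]
    constructor <;> nlinarith
  · rw [max_eq_left hu, max_eq_right (by linarith), max_eq_right hv.le, max_eq_left (by linarith)]
    constructor <;> nlinarith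
  · rw [max_eq_right hu.le, max_eq_left (by linarith), max_eq_left hv, max_eq_right (by linarith)]
    constructor <;> nlinarith
  · rw [max_eq_right hu.le, max_eq_left (by linarith), max_eq_right hv.le, max_eq_left (by linarith)]
    constructor <;> nlinarith

lemma expectile_aux_rho_eq {τ : ℝ} (hτ : τ ∈ Set.Ioo (0:ℝ) 1) (x m : ℝ) :
    |τ - (if x - m < 0 then 1 else 0)| * (x - m) ^ 2
      = τ * (max (x - m) 0) ^ 2 + (1 - τ) * (max (m - x) 0) ^ 2 := by
  obtain ⟨h0, h1⟩ := hτ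
  rcases lt_or_ge (x - m) 0 with h | h
  · rw [if_pos h, max_eq_right h.le, max_eq_left (by linarith), abs_of_nonpos (by linarith)]
    ring
  · rw [if_neg (not_lt.mpr h), max_eq_left h, max_eq_right (by linarith), sub_zero,
      abs_of_nonneg h0.le]
    ring

/-- For a probability space `(Ω, ℱ, P)`, an (essentially) bounded random
variable `X : Ω → ℝ`, and `τ ∈ (0,1)`, the asymmetric squared loss
`m ↦ E[|τ − 𝟙{X − m < 0}|·(X − m)²]` has a unique minimizer `m_τ`, and a real `m`
is that minimizer iff `τ·E[max(X − m, 0)] = (1 − τ)·E[max(m − X, 0)]`. -/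
theorem expectile_unique_minimizer_and_characterization
    {Ω : Type*} [MeasurableSpace Ω] (P : Measure Ω) [IsProbabilityMeasure P]
    (X : Ω → ℝ) (hX : Measurable X) (hbdd : ∃ C : ℝ, ∀ᵐ ω ∂P, |X ω| ≤ C)
    (τ : ℝ) (hτ : τ ∈ Set.Ioo (0 : ℝ) 1) :
    (∃! mτ : ℝ, ∀ m' : ℝ,
        (∫ ω, |τ - (if X ω - mτ < 0 then 1 else 0)| * (X ω - mτ) ^ 2 ∂P)
          ≤ ∫ ω, |τ - (if X ω - m' < 0 then 1 else 0)| * (X ω - m') ^ 2 ∂P) ∧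
    (∀ m : ℝ,
        (∀ m' : ℝ,
          (∫ ω, |τ - (if X ω - m < 0 then 1 else 0)| * (X ω - m) ^ 2 ∂P)
            ≤ ∫ ω, |τ - (if X ω - m' < 0 then 1 else 0)| * (X ω - m') ^ 2 ∂P)
        ↔ τ * ∫ ω, max (X ω - m) 0 ∂P = (1 - τ) * ∫ ω, max (m - X ω) 0 ∂P) := by
  obtain ⟨h0, h1⟩ := hτ
  have hτ' : τ ∈ Set.Ioo (0:ℝ) 1 := ⟨h0, h1⟩
  obtain ⟨C, hC⟩ := hbdd
  have hC0 : 0 ≤ C := by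
    obtain ⟨ω, hω⟩ := hC.exists
    exact le_trans (abs_nonneg _) hω
  -- notation
  set s : ℝ → Ω → ℝ := fun m ω => τ * max (X ω - m) 0 - (1 - τ) * max (m - X ω) 0 with hs
  set F : ℝ → ℝ := fun m => ∫ ω, |τ - (if X ω - m < 0 then 1 else 0)| * (X ω - m) ^ 2 ∂P with hFdef
  set G : ℝ → ℝ := fun m => ∫ ω, s m ω ∂P with hGdef
  -- integrability
  have int_pos : ∀ m : ℝ, Integrable (fun ω => max (X ω - m) 0) P := by
    intro m
    refine Integrable.mono' (integrable_const (C + |m|))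
      (((hX.sub measurable_const).max measurable_const).aestronglyMeasurable) ?_
    filter_upwards [hC] with ω hω
    rw [Real.norm_eq_abs, abs_of_nonneg (le_max_right _ _)]
    have : X ω - m ≤ C + |m| := by
      have := abs_le.mp hω
      have := neg_abs_le m
      have := le_abs_self m
      linarith [this]
    exact max_le this (by positivity)
  have int_neg : ∀ m : ℝ, Integrable (fun ω => max (m - X ω) 0) P := by
    intro m
    refine Integrable.mono' (integrable_const (C + |m|))
      (((measurable_const.sub hX).max measurable_const).aestronglyMeasurable) ?_
    filter_upwards [hC] with ω hω
    rw [Real.norm_eq_abs, abs_of_nonneg (le_max_right _ _)]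
    have : m - X ω ≤ C + |m| := by
      have := abs_le.mp hω
      have := le_abs_self m
      linarith
    exact max_le this (by positivity)
  have int_s : ∀ m : ℝ, Integrable (s m) P := fun m =>
    ((int_pos m).const_mul τ).sub ((int_neg m).const_mul (1 - τ))
  have int_rho : ∀ m : ℝ,
      Integrable (fun ω => τ * (max (X ω - m) 0) ^ 2 + (1 - τ) * (max (m - X ω) 0) ^ 2) P := by
    intro m
    refine Integrable.mono' (integrable_const ((C + |m|) ^ 2))
      (((((hX.sub measurable_const).max measurable_const).pow_const 2).const_mul τ |>.add
        ((((measurable_const.sub hX).max measurable_const).pow_const 2).const_mul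
          (1 - τ))).aestronglyMeasurable) ?_
    filter_upwards [hC] with ω hω
    have hK : 0 ≤ C + |m| := by positivity
    have habs := abs_le.mp hω
    have hma : -|m| ≤ m := neg_abs_le m
    have hmb : m ≤ |m| := le_abs_self m
    have ha1 : 0 ≤ max (X ω - m) 0 := le_max_right _ _
    have ha2 : max (X ω - m) 0 ≤ C + |m| := max_le (by linarith) hK
    have hb1 : 0 ≤ max (m - X ω) 0 := le_max_right _ _
    have hb2 : max (m - X ω) 0 ≤ C + |m| := max_le (by linarith) hK
    rw [Real.norm_eq_abs, abs_of_nonneg (add_nonneg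
      (mul_nonneg h0.le (sq_nonneg _))
      (mul_nonneg (by linarith : (0:ℝ) ≤ 1 - τ) (sq_nonneg _)))]
    nlinarith [pow_le_pow_left₀ ha1 ha2 2, pow_le_pow_left₀ hb1 hb2 2]
  -- F in terms of rho
  have hFs : ∀ m : ℝ,
      F m = ∫ ω, (τ * (max (X ω - m) 0) ^ 2 + (1 - τ) * (max (m - X ω) 0) ^ 2) ∂P := by
    intro m
    exact integral_congr_ae (Filter.Eventually.of_forall fun ω =>
      expectile_aux_rho_eq hτ' (X ω) m)
  -- key convexity inequality at the integral level
  have hkey : ∀ m m' : ℝ, F m + 2 * G m * (m - m') ≤ F m' := by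
    intro m m'
    rw [hFs m, hFs m', hGdef]
    have h2 : (2:ℝ) * (∫ ω, s m ω ∂P) * (m - m') = ∫ ω, 2 * s m ω * (m - m') ∂P := by
      rw [integral_mul_const, integral_const_mul]
    rw [h2, ← integral_add (int_rho m) (((int_s m).const_mul 2).mul_const (m - m'))]
    refine integral_mono (((int_rho m).add (((int_s m).const_mul 2).mul_const (m - m'))))
      (int_rho m') fun ω => ?_
    have := expectile_aux_convex_ineq hτ' (X ω - m) (X ω - m')
    rw [neg_sub, neg_sub] at this
    rw [show X ω - m' - (X ω - m) = m - m' from by ring] at this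
    simp only [hs]
    exact this
  -- Lipschitz property of G
  have hGlip : ∀ m m' : ℝ, |G m - G m'| ≤ |m' - m| := by
    intro m m'
    rw [hGdef]
    simp only
    rw [← integral_sub (int_s m) (int_s m')]
    calc |∫ ω, (s m ω - s m' ω) ∂P| ≤ ∫ ω, |s m ω - s m' ω| ∂P := by
          simpa [Real.norm_eq_abs] using
            norm_integral_le_integral_norm (μ := P) (fun ω => s m ω - s m' ω)
      _ ≤ ∫ _ω, |m' - m| ∂P := by
          refine integral_mono (((int_s m).sub (int_s m')).abs) (integrable_const _) fun ω => ?_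
          have := expectile_aux_slope_lipschitz hτ' (X ω - m) (X ω - m')
          rw [neg_sub, neg_sub, show X ω - m - (X ω - m') = m' - m from by ring] at this
          simpa [hs] using this
      _ = |m' - m| := by simp
  -- strict decrease of G
  have hGdec : ∀ m m' : ℝ, m ≤ m' → G m' ≤ G m - min τ (1 - τ) * (m' - m) := by
    intro m m' hmm
    have : min τ (1 - τ) * (m' - m) ≤ G m - G m' := by
      rw [hGdef]
      simp only
      rw [← integral_sub (int_s m) (int_s m')]
      calc min τ (1 - τ) * (m' - m) = ∫ _ω, min τ (1 - τ) * (m' - m) ∂P := by simp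
        _ ≤ ∫ ω, (s m ω - s m' ω) ∂P := by
            refine integral_mono (integrable_const _) ((int_s m).sub (int_s m')) fun ω => ?_
            have := expectile_aux_slope_decrease hτ'
              (show X ω - m' ≤ X ω - m from by linarith)
            rw [neg_sub, neg_sub, show X ω - m - (X ω - m') = m' - m from by ring] at this
            simpa [hs] using this
    linarith
  -- continuity of G
  have hGcont : Continuous G := by
    have : LipschitzWith 1 G := by
      refine LipschitzWith.of_dist_le_mul fun m m' => ?_
      rw [Real.dist_eq, Real.dist_eq]
      simpa [abs_sub_comm m' m] using hGlip m m'
    exact this.continuous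
  -- sign of G at the endpoints
  have hGneg : G (C + 1) < 0 := by
    have hp : (∫ ω, max (X ω - (C + 1)) 0 ∂P) = 0 := by
      have hz : (fun ω => max (X ω - (C + 1)) 0) =ᵐ[P] (fun _ => (0:ℝ)) := ?_
      · rw [integral_congr_ae hz, integral_zero]
      filter_upwards [hC] with ω hω
      have := abs_le.mp hω
      exact max_eq_right (by linarith)
    have hn : (1:ℝ) ≤ ∫ ω, max ((C + 1) - X ω) 0 ∂P := by
      calc (1:ℝ) = ∫ _ω, (1:ℝ) ∂P := by simp
        _ ≤ ∫ ω, max ((C + 1) - X ω) 0 ∂P := by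
            refine integral_mono_ae (integrable_const _) (int_neg (C + 1)) ?_
            filter_upwards [hC] with ω hω
            have := abs_le.mp hω
            exact le_max_of_le_left (by linarith)
    have hGeq : G (C + 1) = τ * ∫ ω, max (X ω - (C + 1)) 0 ∂P
        - (1 - τ) * ∫ ω, max ((C + 1) - X ω) 0 ∂P := by
      rw [hGdef]
      simp only [hs]
      rw [integral_sub ((int_pos _).const_mul τ) ((int_neg _).const_mul (1 - τ)),
        integral_const_mul, integral_const_mul]
    rw [hGeq, hp]
    nlinarith
  have hGpos : 0 < G (-C - 1) := by
    have hn : (∫ ω, max ((-C - 1) - X ω) 0 ∂P) = 0 := by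
      have hz : (fun ω => max ((-C - 1) - X ω) 0) =ᵐ[P] (fun _ => (0:ℝ)) := ?_
      · rw [integral_congr_ae hz, integral_zero]
      filter_upwards [hC] with ω hω
      have := abs_le.mp hω
      exact max_eq_right (by linarith)
    have hp : (1:ℝ) ≤ ∫ ω, max (X ω - (-C - 1)) 0 ∂P := by
      calc (1:ℝ) = ∫ _ω, (1:ℝ) ∂P := by simp
        _ ≤ ∫ ω, max (X ω - (-C - 1)) 0 ∂P := by
            refine integral_mono_ae (integrable_const _) (int_pos (-C - 1)) ?_
            filter_upwards [hC] with ω hω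
            have := abs_le.mp hω
            exact le_max_of_le_left (by linarith)
    have hGeq : G (-C - 1) = τ * ∫ ω, max (X ω - (-C - 1)) 0 ∂P
        - (1 - τ) * ∫ ω, max ((-C - 1) - X ω) 0 ∂P := by
      rw [hGdef]
      simp only [hs]
      rw [integral_sub ((int_pos _).const_mul τ) ((int_neg _).const_mul (1 - τ)),
        integral_const_mul, integral_const_mul]
    rw [hGeq, hn]
    nlinarith
  -- existence of a root of G
  have hroot : ∃ m₀ : ℝ, G m₀ = 0 := by
    have hab : (-C - 1 : ℝ) ≤ C + 1 := by linarith
    have := intermediate_value_Icc' hab hGcont.continuousOn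
    have h0mem : (0:ℝ) ∈ Set.Icc (G (C + 1)) (G (-C - 1)) := ⟨hGneg.le, hGpos.le⟩
    obtain ⟨m₀, _, hm₀⟩ := this h0mem
    exact ⟨m₀, hm₀⟩
  -- uniqueness of the root
  have hrootu : ∀ m₁ m₂ : ℝ, G m₁ = 0 → G m₂ = 0 → m₁ = m₂ := by
    intro m₁ m₂ h₁ h₂
    by_contra hne
    have hmin : 0 < min τ (1 - τ) := lt_min h0 (by linarith)
    rcases lt_or_gt_of_ne hne with h | h
    · have := hGdec m₁ m₂ h.le
      nlinarith
    · have := hGdec m₂ m₁ h.le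
      nlinarith
  -- minimizer iff G m = 0
  have hchar : ∀ m : ℝ, (∀ m' : ℝ, F m ≤ F m') ↔ G m = 0 := by
    intro m
    constructor
    · intro hmin
      by_contra hne
      rcases lt_or_gt_of_ne hne with hneg | hpos
      · -- G m < 0 : move left
        set m' := m + G m / 2 with hm'
        have hd : |G m - G m'| ≤ |m' - m| := hGlip m m'
        have habs : |m' - m| = -(G m / 2) := by
          rw [hm']; rw [show m + G m / 2 - m = G m / 2 from by ring]
          rw [abs_of_nonpos (by linarith)]
        have hGm' : G m' ≤ G m / 2 := by
          have := abs_le.mp hd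
          rw [habs] at this
          linarith [this.1]
        have hk := hkey m' m
        have hFm : F m ≤ F m' := hmin m'
        have : 2 * G m' * (m' - m) ≤ 0 := by linarith
        rw [show m' - m = G m / 2 from by rw [hm']; ring] at this
        nlinarith
      · -- G m > 0 : move right
        set m' := m + G m / 2 with hm'
        have hd : |G m - G m'| ≤ |m' - m| := hGlip m m'
        have habs : |m' - m| = G m / 2 := by
          rw [hm', show m + G m / 2 - m = G m / 2 from by ring, abs_of_nonneg (by linarith)]
        have hGm' : G m / 2 ≤ G m' := by
          have := abs_le.mp hd
          rw [habs] at this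
          linarith [this.2]
        have hk := hkey m' m
        have hFm : F m ≤ F m' := hmin m'
        have : 2 * G m' * (m' - m) ≤ 0 := by linarith
        rw [show m' - m = G m / 2 from by rw [hm']; ring] at this
        nlinarith
    · intro hGm m'
      have := hkey m m'
      rw [hGm] at this
      linarith
  -- G m = 0 iff the stated equality
  have hGiff : ∀ m : ℝ, G m = 0 ↔
      τ * ∫ ω, max (X ω - m) 0 ∂P = (1 - τ) * ∫ ω, max (m - X ω) 0 ∂P := by
    intro m
    have hGeq : G m = τ * ∫ ω, max (X ω - m) 0 ∂P
        - (1 - τ) * ∫ ω, max (m - X ω) 0 ∂P := by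
      rw [hGdef]
      simp only [hs]
      rw [integral_sub ((int_pos _).const_mul τ) ((int_neg _).const_mul (1 - τ)),
        integral_const_mul, integral_const_mul]
    rw [hGeq, sub_eq_zero]
  constructor
  · obtain ⟨m₀, hm₀⟩ := hroot
    refine ⟨m₀, (hchar m₀).mpr hm₀, fun m hm => ?_⟩
    exact hrootu m m₀ ((hchar m).mp hm) hm₀
  · intro m
    rw [hchar m, hGiff m]
end

section
/- Let (Ω, ℱ, ℙ) be a probability space, X : Ω → ℝ a bounded (essentially bounded) random variable, and 0 < τ₁ ≤ τ₂ < 1. If m₁ is a τ₁-expectile of X and m₂ is a τ₂-expectile of X, then m₁ ≤ m₂. -/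
open MeasureTheory

lemma expectile_aux_int {Ω : Type*} [MeasurableSpace Ω] (P : Measure Ω)
    [IsProbabilityMeasure P] (X : Ω → ℝ) (hX : Measurable X)
    {C : ℝ} (hC : ∀ᵐ ω ∂P, |X ω| ≤ C) (m : ℝ) :
    Integrable (fun ω => max (X ω - m) 0) P := by
  apply Integrable.mono' (integrable_const (|C| + |m|))
    ((hX.sub measurable_const).max measurable_const).aestronglyMeasurable
  filter_upwards [hC] with ω h
  rw [Real.norm_eq_abs, abs_of_nonneg (le_max_right _ _)]
  have h1 : X ω - m ≤ |C| + |m| := by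
    have := abs_le.mp h
    have := neg_abs_le m
    have := le_abs_self C
    linarith [this, abs_le.mp h |>.2]
  have h2 : (0:ℝ) ≤ |C| + |m| := by positivity
  exact max_le h1 h2

/-- For a probability space, a bounded random variable `X`, and
`0 < τ₁ ≤ τ₂ < 1`, if `m₁` is a `τ₁`-expectile of `X` and `m₂` is a `τ₂`-expectile
of `X`, then `m₁ ≤ m₂`. -/
theorem expectile_mono_in_tau
    {Ω : Type*} [MeasurableSpace Ω] (P : Measure Ω) [IsProbabilityMeasure P]
    (X : Ω → ℝ) (hX : Measurable X) (hbdd : ∃ C : ℝ, ∀ᵐ ω ∂P, |X ω| ≤ C)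
    (τ₁ τ₂ : ℝ) (h0 : 0 < τ₁) (h12 : τ₁ ≤ τ₂) (h1 : τ₂ < 1)
    (m₁ m₂ : ℝ)
    (hm₁ : τ₁ * ∫ ω, max (X ω - m₁) 0 ∂P = (1 - τ₁) * ∫ ω, max (m₁ - X ω) 0 ∂P)
    (hm₂ : τ₂ * ∫ ω, max (X ω - m₂) 0 ∂P = (1 - τ₂) * ∫ ω, max (m₂ - X ω) 0 ∂P) :
    m₁ ≤ m₂ := by
  by_contra hcon
  push_neg at hcon
  obtain ⟨C, hC⟩ := hbdd
  have hCneg : ∀ᵐ ω ∂P, |(-X) ω| ≤ C := by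
    filter_upwards [hC] with ω h; simpa [abs_neg] using h
  -- integrability
  have If1 : Integrable (fun ω => max (X ω - m₁) 0) P :=
    expectile_aux_int P X hX hC m₁
  have If2 : Integrable (fun ω => max (X ω - m₂) 0) P :=
    expectile_aux_int P X hX hC m₂
  have Ih1 : Integrable (fun ω => max (m₁ - X ω) 0) P := by
    have := expectile_aux_int P (fun ω => -X ω) hX.neg hCneg (-m₁)
    simpa [sub_eq_add_neg, add_comm] using this
  have Ih2 : Integrable (fun ω => max (m₂ - X ω) 0) P := by
    have := expectile_aux_int P (fun ω => -X ω) hX.neg hCneg (-m₂)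
    simpa [sub_eq_add_neg, add_comm] using this
  have IX : Integrable X P := by
    apply Integrable.mono' (integrable_const C) hX.aestronglyMeasurable
    filter_upwards [hC] with ω h; simpa using h
  set f₁ := ∫ ω, max (X ω - m₁) 0 ∂P with hf₁
  set f₂ := ∫ ω, max (X ω - m₂) 0 ∂P with hf₂
  set g₁ := ∫ ω, max (m₁ - X ω) 0 ∂P with hg₁
  set g₂ := ∫ ω, max (m₂ - X ω) 0 ∂P with hg₂
  -- monotonicity of f and g in m
  have hf : f₁ ≤ f₂ := by
    apply integral_mono If1 If2
    intro ω
    exact max_le_max (by linarith [le_of_lt hcon]) le_rfl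
  have hg : g₂ ≤ g₁ := by
    apply integral_mono Ih2 Ih1
    intro ω
    exact max_le_max (by linarith [le_of_lt hcon]) le_rfl
  -- identity f − g = E X − m
  have key : ∀ (m : ℝ), (∫ ω, max (X ω - m) 0 ∂P) - (∫ ω, max (m - X ω) 0 ∂P)
      = (∫ ω, X ω ∂P) - m := by
    intro m
    rw [← integral_sub (expectile_aux_int P X hX hC m)
      (by
        have := expectile_aux_int P (fun ω => -X ω) hX.neg hCneg (-m)
        simpa [sub_eq_add_neg, add_comm] using this)]
    have : ∀ ω, max (X ω - m) 0 - max (m - X ω) 0 = X ω - m := by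
      intro ω
      rcases le_total (X ω) m with h | h
      · rw [max_eq_right (by linarith), max_eq_left (by linarith)]; ring
      · rw [max_eq_left (by linarith), max_eq_right (by linarith)]; ring
    simp_rw [this]
    rw [integral_sub IX (integrable_const m)]
    simp
  have k1 := key m₁
  have k2 := key m₂
  rw [← hf₁, ← hg₁] at k1
  rw [← hf₂, ← hg₂] at k2
  have hfpos : 0 ≤ f₁ := integral_nonneg fun ω => le_max_right _ _
  have hgpos : 0 ≤ g₁ := integral_nonneg fun ω => le_max_right _ _
  -- g_{τ₂}(m₁) ≥ 0
  have step1 : 0 ≤ τ₂ * f₁ - (1 - τ₂) * g₁ := by nlinarith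
  -- strict decrease
  rcases le_total (2 * τ₂) 1 with hτ | hτ
  · nlinarith
  · nlinarith
end

section
/- (Lemma 1) Let (Ω, ℱ, ℙ) be a probability space and X : Ω → ℝ a random variable with bounded support whose essential supremum is x*. Let m : (0,1) → ℝ be such that for each τ ∈ (0,1), m(τ) is a τ-expectile of X. Then m(τ) tends to x* as τ tends to 1 from the left. -/
open MeasureTheory Filter Topology

/-! Write `U a = E[(X - a)⁺]` and `L a = E[(a - X)⁺]`, so that `m` is a `τ`-expectile iff
`τ U m = (1 - τ) L m`. Every expectile lies below `x*`, since above `x*` the left side vanishes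
while the right side does not. If `m ≤ a < x*`, monotonicity gives `τ U a ≤ τ U m = (1 - τ) L m ≤
(1 - τ) L x*`, which fails for `τ` close to `1` because `U a > 0`. -/

def IsExpectile {Ω : Type*} [MeasurableSpace Ω] (P : Measure Ω) (X : Ω → ℝ) (τ m : ℝ) : Prop :=
  τ * ∫ ω, max (X ω - m) 0 ∂P = (1 - τ) * ∫ ω, max (m - X ω) 0 ∂P

section

variable {Ω : Type*} [MeasurableSpace Ω] {P : Measure Ω} {X : Ω → ℝ}

lemma antitone_integral_max_sub_const_zero [IsFiniteMeasure P] (hX : Integrable X P) :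
    Antitone fun a => ∫ ω, max (X ω - a) 0 ∂P := fun _ _ hab =>
  integral_mono (hX.sub (integrable_const _)).pos_part (hX.sub (integrable_const _)).pos_part
    fun _ => max_le_max (by linarith) le_rfl

lemma monotone_integral_max_const_sub_zero [IsFiniteMeasure P] (hX : Integrable X P) :
    Monotone fun a => ∫ ω, max (a - X ω) 0 ∂P := fun _ _ hab =>
  integral_mono ((integrable_const _).sub hX).pos_part ((integrable_const _).sub hX).pos_part
    fun _ => max_le_max (by linarith) le_rfl

lemma integral_max_sub_const_zero_pos [IsFiniteMeasure P] (hX : Integrable X P)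
    (hXc : IsCoboundedUnder (· ≤ ·) (ae P) X) {a : ℝ} (ha : a < essSup X P) :
    0 < ∫ ω, max (X ω - a) 0 ∂P := by
  have hnonneg : 0 ≤ᵐ[P] fun ω => max (X ω - a) 0 := ae_of_all _ fun _ => le_max_right _ _
  refine (integral_nonneg_of_ae hnonneg).lt_of_ne fun hzero => ha.not_ge ?_
  have hvanish := (integral_eq_zero_iff_of_nonneg_ae hnonneg
    (hX.sub (integrable_const a)).pos_part).1 hzero.symm
  refine essSup_le_of_ae_le a (hvanish.mono fun ω hω => ?_) hXc
  simpa using hω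

variable [IsProbabilityMeasure P] {τ m : ℝ}

lemma IsExpectile.le_essSup (h : IsExpectile P X τ m) (hX : Integrable X P)
    (hXb : IsBoundedUnder (· ≤ ·) (ae P) X) (hτ : τ < 1) : m ≤ essSup X P := by
  by_contra! hlt
  have hX_le := ae_le_essSup hXb
  have hupper : ∫ ω, max (X ω - m) 0 ∂P = 0 :=
    integral_eq_zero_of_ae (hX_le.mono fun ω hω => max_eq_right (by linarith))
  have hlower : m - essSup X P ≤ ∫ ω, max (m - X ω) 0 ∂P := by
    calc m - essSup X P = ∫ _, m - essSup X P ∂P := by simp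
      _ ≤ ∫ ω, max (m - X ω) 0 ∂P :=
        integral_mono_ae (integrable_const _) ((integrable_const _).sub hX).pos_part
          (hX_le.mono fun ω hω => le_max_of_le_left (by linarith))
  have : (1 - τ) * ∫ ω, max (m - X ω) 0 ∂P = 0 := by rw [← h, hupper, mul_zero]
  linarith [(mul_eq_zero.1 this).resolve_left (sub_ne_zero.2 hτ.ne')]

lemma eventually_lt_of_isExpectile (hX : Integrable X P) (hXb : IsBoundedUnder (· ≤ ·) (ae P) X)
    (hXc : IsCoboundedUnder (· ≤ ·) (ae P) X) {a : ℝ} (ha : a < essSup X P) :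
    ∀ᶠ τ in 𝓝[<] 1, ∀ m, IsExpectile P X τ m → a < m := by
  set u := ∫ ω, max (X ω - a) 0 ∂P
  set l := ∫ ω, max (essSup X P - X ω) 0 ∂P
  have hu : 0 < u := integral_max_sub_const_zero_pos hX hXc ha
  have hτ_close : ∀ᶠ τ in 𝓝 (1 : ℝ), (1 - τ) * l < τ * u :=
    (by fun_prop : Continuous fun τ : ℝ => (1 - τ) * l).continuousAt.eventually_lt
      (by fun_prop : Continuous fun τ : ℝ => τ * u).continuousAt (by simpa using hu)
  filter_upwards [nhdsWithin_le_nhds hτ_close, Ioo_mem_nhdsLT one_pos] with τ hτl hτ m hm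
  by_contra! hma
  have := calc τ * u
      ≤ τ * ∫ ω, max (X ω - m) 0 ∂P :=
        mul_le_mul_of_nonneg_left (antitone_integral_max_sub_const_zero hX hma) hτ.1.le
    _ = (1 - τ) * ∫ ω, max (m - X ω) 0 ∂P := hm
    _ ≤ (1 - τ) * l := mul_le_mul_of_nonneg_left
        (monotone_integral_max_const_sub_zero hX (hm.le_essSup hX hXb hτ.2)) (by linarith [hτ.2])
  linarith

end

/-- Lemma 1: For a probability space and a bounded-support random
variable `X` with essential supremum `x* = essSup X P`, if `m τ` is a
`τ`-expectile of `X` for each `τ ∈ (0,1)`, then `m τ → x*` as `τ → 1⁻`. -/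
theorem expectile_tendsto_essSup
    {Ω : Type*} [MeasurableSpace Ω] (P : Measure Ω) [IsProbabilityMeasure P]
    (X : Ω → ℝ) (hX : Measurable X) (hbdd : ∃ C : ℝ, ∀ᵐ ω ∂P, |X ω| ≤ C)
    (m : ℝ → ℝ)
    (hm : ∀ τ ∈ Set.Ioo (0 : ℝ) 1,
      τ * ∫ ω, max (X ω - m τ) 0 ∂P = (1 - τ) * ∫ ω, max (m τ - X ω) 0 ∂P) :
    Tendsto m (nhdsWithin 1 (Set.Iio 1)) (nhds (essSup X P)) := by
  obtain ⟨C, hC⟩ := hbdd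
  have hXi : Integrable X P := .of_bound hX.aestronglyMeasurable C hC
  have hXb : IsBoundedUnder (· ≤ ·) (ae P) X := ⟨C, hC.mono fun _ h => (abs_le.1 h).2⟩
  have hXc : IsCoboundedUnder (· ≤ ·) (ae P) X :=
    isCoboundedUnder_le_of_eventually_le _ (hC.mono fun _ h => (abs_le.1 h).1)
  have hexp : ∀ τ ∈ Set.Ioo (0 : ℝ) 1, IsExpectile P X τ (m τ) := hm
  have hτ : ∀ᶠ τ in 𝓝[<] 1, τ ∈ Set.Ioo (0 : ℝ) 1 := Ioo_mem_nhdsLT one_pos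
  refine tendsto_order.2 ⟨fun a ha => ?_, fun b hb => ?_⟩
  · filter_upwards [eventually_lt_of_isExpectile hXi hXb hXc ha, hτ] with τ hlt hτ
    exact hlt _ (hexp τ hτ)
  · filter_upwards [hτ] with τ hτ
    exact ((hexp τ hτ).le_essSup hXi hXb hτ.2).trans_lt hb
end
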